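/- Let λ* : E → ℕ be the exponent vector with λ*(e) = λ*(f) = 0 and λ*(g) = 1 for all g ∈ E^{ef}. If N ∈ R satisfies D = x_e · x_f · (1 − q) · N, then the coefficient of the monomial x^{λ*} in the evaluation of N at q = 1 equals the number of paracels F ⊆ E^{ef}. -/

import Mathlib

open Finset

section Defs

variable {V : Type*} {E : Type*}

/-- The graph on vertex set `V` whose adjacency is given by the edges in `F`
(a loop joins nothing). -/
def etaGraph (ends : E → Sym2 V) (F : Finset E) : SimpleGraph V where
  Adj v w := v ≠ w ∧ ∃ g ∈ F, ends g = s(v, w)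
  symm := by
    constructor
    rintro v w ⟨hvw, g, hg, hends⟩
    exact ⟨hvw.symm, g, hg, by rw [hends, Sym2.eq_swap]⟩
  loopless := by constructor; rintro v ⟨h, -⟩; exact h rfl

/-- `k(F)`: the number of connected components of `η(F)`. -/
noncomputable def kComp (ends : E → Sym2 V) (F : Finset E) : ℕ :=
  Nat.card (etaGraph ends F).ConnectedComponent

/-- The edge with endpoint pair `s` joins the connected component of `a`
with that of `b` in the graph `G`. -/
def Joins (G : SimpleGraph V) (s : Sym2 V) (a b : V) : Prop :=
  ∃ u v : V, s = s(u, v) ∧ G.Reachable a u ∧ G.Reachable b v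

/-- `F ⊆ E^{ef}` is a paracel if `e` and `f` each join the same two distinct
connected components of `η(F)`. -/
def IsParacel (ends : E → Sym2 V) (e f : E) (F : Finset E) : Prop :=
  e ∉ F ∧ f ∉ F ∧ ∃ a b : V,
    ¬ (etaGraph ends F).Reachable a b ∧
    Joins (etaGraph ends F) (ends e) a b ∧
    Joins (etaGraph ends F) (ends f) a b

/-- `g ∈ E^{ef} ∖ F` is a smoot for the paracel `F` if it joins the same two
connected components of `η(F)` as `e` and `f` do. -/
def IsSmoot (ends : E → Sym2 V) (e f : E) (F : Finset E) (g : E) : Prop :=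
  g ∉ F ∧ g ≠ e ∧ g ≠ f ∧ ∃ a b : V,
    ¬ (etaGraph ends F).Reachable a b ∧
    Joins (etaGraph ends F) (ends e) a b ∧
    Joins (etaGraph ends F) (ends f) a b ∧
    Joins (etaGraph ends F) (ends g) a b

variable [DecidableEq E]

/-- `α` is compatible with `(β, γ)`. -/
def Compatible (ends : E → Sym2 V) (e f : E) (β γ α : Finset E) : Prop :=
  e ∉ α ∧ f ∉ α ∧ Disjoint α β ∧ Disjoint α γ ∧
    IsParacel ends e f (γ ∪ α) ∧ ∀ g ∈ β, IsSmoot ends e f (γ ∪ α) g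

/-- indicator function of a finite edge set, as an exponent vector. -/
def indic (A : Finset E) : E → ℕ := fun g => if g ∈ A then 1 else 0

/-- `B_{β,γ}` as a set of exponent vectors `1_α + 1_{α'}` for twins `α, α'`. -/
def Bset (ends : E → Sym2 V) (e f : E) (β γ : Finset E) : Set (E → ℕ) :=
  { d | ∃ α α' : Finset E,
      Compatible ends e f β γ α ∧ Compatible ends e f β γ α' ∧
      Compatible ends e f β γ (α ∩ α') ∧ d = indic α + indic α' }

/-- `x^F = ∏_{g ∈ F} x_g`. -/
noncomputable def xF (A : Finset E) : MvPolynomial E ℤ := ∏ g ∈ A, MvPolynomial.X g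

variable [Fintype E]

/-- `E^{ef} = E ∖ {e, f}`. -/
def Eef (e f : E) : Finset E := Finset.univ \ {e, f}

/-- `x^d = ∏_g x_g^{d g}` for an exponent vector `d`. -/
noncomputable def xPow (d : E → ℕ) : MvPolynomial E ℤ := ∏ g : E, MvPolynomial.X g ^ d g

/-- `B_{β,γ}` as a finite set of exponent vectors, each counted once. -/
noncomputable def Bfin (ends : E → Sym2 V) (e f : E) (β γ : Finset E) :
    Finset (E → ℕ) := by
  classical
  exact (Finset.univ.filter (fun p : Finset E × Finset E =>
      Compatible ends e f β γ p.1 ∧ Compatible ends e f β γ p.2 ∧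
      Compatible ends e f β γ (p.1 ∩ p.2))).image fun p => indic p.1 + indic p.2

/-- `T_A^B = Σ_{A ⊆ F, F ∩ B = ∅} x^F q^{k(F)}` in `R = (MvPolynomial E ℤ)[q]`. -/
noncomputable def Tab (ends : E → Sym2 V) (A B : Finset E) :
    Polynomial (MvPolynomial E ℤ) :=
  ∑ F ∈ Finset.univ.filter (fun F : Finset E => A ⊆ F ∧ F ∩ B = ∅),
    Polynomial.C (xF F) * Polynomial.X ^ kComp ends F

/-- `D = T_e^f T_f^e − T_{ef} T^{ef}`. -/
noncomputable def Dpoly (ends : E → Sym2 V) (e f : E) :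
    Polynomial (MvPolynomial E ℤ) :=
  Tab ends {e} {f} * Tab ends {f} {e} - Tab ends {e, f} ∅ * Tab ends ∅ {e, f}

/-- The combinatorial sum
`S = Σ_{(β,γ) disjoint ⊆ E^{ef}} x^β x^γ Σ_{d ∈ B_{β,γ}} x^d`. -/
noncomputable def Ssum (ends : E → Sym2 V) (e f : E) : MvPolynomial E ℤ := by
  classical
  exact ∑ p ∈ Finset.univ.filter (fun p : Finset E × Finset E =>
      p.1 ⊆ Eef e f ∧ p.2 ⊆ Eef e f ∧ Disjoint p.1 p.2),
    xF p.1 * xF p.2 * ∑ d ∈ Bfin ends e f p.1 p.2, xPow d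

/-- `k₁(A,B) = k(A+e) + k(B+f)`. -/
noncomputable def kOne (ends : E → Sym2 V) (e f : E) (A B : Finset E) : ℕ :=
  kComp ends (insert e A) + kComp ends (insert f B)

/-- `k₂(A,B) = k(A+e+f) + k(B)`. -/
noncomputable def kTwo (ends : E → Sym2 V) (e f : E) (A B : Finset E) : ℕ :=
  kComp ends (insert f (insert e A)) + kComp ends B

/-- The coefficient of the monomial `x^lam` in an element of
`(MvPolynomial E ℤ)[q]`, as an element of `ℤ[q]`. -/
noncomputable def monCoeff (P : Polynomial (MvPolynomial E ℤ)) (lam : E →₀ ℕ) :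
    Polynomial ℤ :=
  P.sum fun n c => Polynomial.C (MvPolynomial.coeff lam c) * Polynomial.X ^ n

end Defs

section Graph

open Finset SimpleGraph

variable {V : Type*} {E : Type*}

lemma etaGraph_le (ends : E → Sym2 V) {F F' : Finset E} (h : F ⊆ F') :
    etaGraph ends F ≤ etaGraph ends F' := by
  rintro u v ⟨huv, g, hg, hends⟩
  exact ⟨huv, g, h hg, hends⟩

lemma adj_insert (ends : E → Sym2 V) [DecidableEq E] {F : Finset E} {g : E} {u v : V} :
    (etaGraph ends (insert g F)).Adj u v ↔
      (etaGraph ends F).Adj u v ∨ (u ≠ v ∧ ends g = s(u, v)) := by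
  constructor
  · rintro ⟨huv, h, hh, hends⟩
    rcases Finset.mem_insert.mp hh with rfl | hh
    · exact Or.inr ⟨huv, hends⟩
    · exact Or.inl ⟨huv, h, hh, hends⟩
  · rintro (⟨huv, h, hh, hends⟩ | ⟨huv, hends⟩)
    · exact ⟨huv, h, Finset.mem_insert_of_mem hh, hends⟩
    · exact ⟨huv, g, Finset.mem_insert_self _ _, hends⟩

lemma reach_insert (ends : E → Sym2 V) [DecidableEq E] {F : Finset E} {g : E} {a b : V}
    (hg : ends g = s(a, b)) {u v : V} :
    (etaGraph ends (insert g F)).Reachable u v ↔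
      (etaGraph ends F).Reachable u v ∨
      ((etaGraph ends F).Reachable u a ∧ (etaGraph ends F).Reachable b v) ∨
      ((etaGraph ends F).Reachable u b ∧ (etaGraph ends F).Reachable a v) := by
  set G := etaGraph ends F with hG
  constructor
  · intro hr
    obtain ⟨w⟩ := hr
    induction w with
    | nil => exact Or.inl (Reachable.refl _)
    | @cons x y z hxy w ih =>
      rcases (adj_insert ends).mp hxy with hxy' | ⟨hxyne, hends⟩
      · rcases ih with h | ⟨h1, h2⟩ | ⟨h1, h2⟩
        · exact Or.inl (hxy'.reachable.trans h)
        · exact Or.inr (Or.inl ⟨hxy'.reachable.trans h1, h2⟩)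
        · exact Or.inr (Or.inr ⟨hxy'.reachable.trans h1, h2⟩)
      · rw [hg, Sym2.eq_iff] at hends
        rcases hends with ⟨rfl, rfl⟩ | ⟨rfl, rfl⟩
        · -- x = a, y = b
          rcases ih with h | ⟨h1, h2⟩ | ⟨h1, h2⟩
          · exact Or.inr (Or.inl ⟨Reachable.refl _, h⟩)
          · -- R b a, R b z
            exact Or.inl (h1.symm.trans h2)
          · -- R b b, R a z
            exact Or.inl h2
        · -- x = b, y = a
          rcases ih with h | ⟨h1, h2⟩ | ⟨h1, h2⟩
          · exact Or.inr (Or.inr ⟨Reachable.refl _, h⟩)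
          · -- R a a, R b z
            exact Or.inl h2
          · -- R a b, R a z
            exact Or.inl (h1.symm.trans h2)
  · have hle : G ≤ etaGraph ends (insert g F) :=
      etaGraph_le ends (Finset.subset_insert g F)
    have hab : (etaGraph ends (insert g F)).Reachable a b := by
      by_cases h : a = b
      · exact h ▸ Reachable.refl _
      · exact Adj.reachable ((adj_insert ends).mpr (Or.inr ⟨h, hg⟩))
    rintro (h | ⟨h1, h2⟩ | ⟨h1, h2⟩)
    · exact h.mono hle
    · exact ((h1.mono hle).trans hab).trans (h2.mono hle)
    · exact ((h1.mono hle).trans hab.symm).trans (h2.mono hle)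

/-- the map on components induced by reachability-preservation -/
noncomputable def ccPush {G G' : SimpleGraph V} (h : G ≤ G') :
    G.ConnectedComponent → G'.ConnectedComponent :=
  SimpleGraph.ConnectedComponent.lift (fun v => G'.connectedComponentMk v)
    (fun _ _ p _ => ConnectedComponent.sound ((Reachable.mono h ⟨p⟩)))

lemma ccPush_mk {G G' : SimpleGraph V} (h : G ≤ G') (v : V) :
    ccPush h (G.connectedComponentMk v) = G'.connectedComponentMk v :=
  ConnectedComponent.lift_mk

lemma ccPush_surjective {G G' : SimpleGraph V} (h : G ≤ G') :
    Function.Surjective (ccPush h) := by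
  intro c
  induction c using ConnectedComponent.ind with
  | _ v => exact ⟨G.connectedComponentMk v, ccPush_mk h v⟩

lemma kComp_insert_of_reachable (ends : E → Sym2 V) [DecidableEq E] [Fintype V]
    {F : Finset E} {g : E} {a b : V}
    (hg : ends g = s(a, b)) (hab : (etaGraph ends F).Reachable a b) :
    kComp ends (insert g F) = kComp ends F := by
  set G := etaGraph ends F
  set G' := etaGraph ends (insert g F)
  have hle : G ≤ G' := etaGraph_le ends (Finset.subset_insert g F)
  have hinj : Function.Injective (ccPush hle) := by
    intro c c'
    induction c using ConnectedComponent.ind with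
    | _ u =>
    induction c' using ConnectedComponent.ind with
    | _ v =>
    intro hcc
    rw [ccPush_mk, ccPush_mk] at hcc
    have hr : G'.Reachable u v := ConnectedComponent.exact hcc
    rcases (reach_insert ends hg).mp hr with h | ⟨h1, h2⟩ | ⟨h1, h2⟩
    · exact ConnectedComponent.sound h
    · exact ConnectedComponent.sound ((h1.trans hab).trans h2)
    · exact ConnectedComponent.sound ((h1.trans hab.symm).trans h2)
  unfold kComp
  exact (Nat.card_eq_of_bijective _ ⟨hinj, ccPush_surjective hle⟩).symm

lemma kComp_insert_of_not_reachable (ends : E → Sym2 V) [DecidableEq E] [Fintype V]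
    {F : Finset E} {g : E} {a b : V}
    (hg : ends g = s(a, b)) (hab : ¬ (etaGraph ends F).Reachable a b) :
    kComp ends F = kComp ends (insert g F) + 1 := by
  classical
  set G := etaGraph ends F
  set G' := etaGraph ends (insert g F)
  have hle : G ≤ G' := etaGraph_le ends (Finset.subset_insert g F)
  have hane : a ≠ b := fun h => hab (h ▸ Reachable.refl _)
  -- θ : components ≠ [b] → components of G'
  have hbij : Function.Bijective
      (fun c : {c : G.ConnectedComponent // c ≠ G.connectedComponentMk b} =>
        ccPush hle c.1) := by
    constructor
    · rintro ⟨c, hc⟩ ⟨c', hc'⟩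
      induction c using ConnectedComponent.ind with
      | _ u =>
      induction c' using ConnectedComponent.ind with
      | _ v =>
      intro hcc
      simp only [ccPush_mk] at hcc
      have hr : G'.Reachable u v := ConnectedComponent.exact hcc
      apply Subtype.ext
      rcases (reach_insert ends hg).mp hr with h | ⟨h1, h2⟩ | ⟨h1, h2⟩
      · exact ConnectedComponent.sound h
      · exact absurd (ConnectedComponent.sound h2.symm) hc'
      · exact absurd (ConnectedComponent.sound h1) hc
    · intro c
      induction c using ConnectedComponent.ind with
      | _ v =>
      by_cases hvb : G.Reachable v b
      · refine ⟨⟨G.connectedComponentMk a, ?_⟩, ?_⟩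
        · intro h
          exact hab (ConnectedComponent.exact h)
        · simp only [ccPush_mk]
          apply ConnectedComponent.sound
          have hab' : G'.Reachable a b :=
            Adj.reachable ((adj_insert ends).mpr (Or.inr ⟨hane, hg⟩))
          exact hab'.trans (hvb.mono hle).symm
      · exact ⟨⟨G.connectedComponentMk v, fun h => hvb (ConnectedComponent.exact h)⟩,
          ccPush_mk hle v⟩
  have hcard : Nat.card {c : G.ConnectedComponent // c ≠ G.connectedComponentMk b} =
      Nat.card G'.ConnectedComponent := Nat.card_eq_of_bijective _ hbij
  unfold kComp
  rw [← hcard]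
  have := Nat.card_congr (Equiv.optionSubtypeNe (G.connectedComponentMk b)).symm
  rw [this]
  haveI : Finite G.ConnectedComponent := Quot.finite _
  haveI : Fintype {c : G.ConnectedComponent // c ≠ G.connectedComponentMk b} :=
    Fintype.ofFinite _
  rw [Nat.card_eq_fintype_card, Fintype.card_option, Nat.card_eq_fintype_card]

lemma joins_iff {G : SimpleGraph V} {s : Sym2 V} {a b x y : V} (hs : s = s(a, b)) :
    Joins G s x y ↔ (G.Reachable x a ∧ G.Reachable y b) ∨
      (G.Reachable x b ∧ G.Reachable y a) := by
  constructor
  · rintro ⟨u, v, huv, h1, h2⟩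
    rw [hs, Sym2.eq_iff] at huv
    rcases huv with ⟨rfl, rfl⟩ | ⟨rfl, rfl⟩
    · exact Or.inl ⟨h1, h2⟩
    · exact Or.inr ⟨h1, h2⟩
  · rintro (⟨h1, h2⟩ | ⟨h1, h2⟩)
    · exact ⟨a, b, hs, h1, h2⟩
    · exact ⟨b, a, by rw [hs, Sym2.eq_swap], h1, h2⟩

section Pointwise

variable (ends : E → Sym2 V) [DecidableEq E] [Fintype V] {e f : E} {A : Finset E}

lemma pointwise_paracel (hP : IsParacel ends e f A) :
    ((kComp ends A : ℤ) - kComp ends (insert f A)) -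
      ((kComp ends (insert e A) : ℤ) - kComp ends (insert f (insert e A))) = 1 := by
  obtain ⟨he, hf, x, y, hxy, hJe, hJf⟩ := hP
  obtain ⟨a, b, hE⟩ : ∃ a b, ends e = s(a, b) :=
    Sym2.ind (fun a b => ⟨a, b, rfl⟩) (ends e)
  obtain ⟨c, d, hF⟩ : ∃ c d, ends f = s(c, d) :=
    Sym2.ind (fun c d => ⟨c, d, rfl⟩) (ends f)
  set G := etaGraph ends A
  -- endpoints of f are not reachable in G
  have hcd : ¬ G.Reachable c d := by
    intro h
    rcases (joins_iff hF).mp hJf with ⟨h1, h2⟩ | ⟨h1, h2⟩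
    · exact hxy ((h1.trans h).trans h2.symm)
    · exact hxy ((h1.trans h.symm).trans h2.symm)
  -- endpoints of f are reachable after adding e
  have hcd' : (etaGraph ends (insert e A)).Reachable c d := by
    rw [reach_insert ends hE]
    rcases (joins_iff hE).mp hJe with ⟨h1, h2⟩ | ⟨h1, h2⟩ <;>
      rcases (joins_iff hF).mp hJf with ⟨g1, g2⟩ | ⟨g1, g2⟩
    · exact Or.inr (Or.inl ⟨g1.symm.trans h1, h2.symm.trans g2⟩)
    · exact Or.inr (Or.inr ⟨g2.symm.trans h2, h1.symm.trans g1⟩)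
    · exact Or.inr (Or.inr ⟨g1.symm.trans h1, h2.symm.trans g2⟩)
    · exact Or.inr (Or.inl ⟨g2.symm.trans h2, h1.symm.trans g1⟩)
  have t1 := kComp_insert_of_not_reachable ends hF hcd
  have t2 := kComp_insert_of_reachable ends hF hcd'
  rw [t1, t2]
  push_cast
  ring

lemma pointwise_not_paracel (he : e ∉ A) (hf : f ∉ A) (hP : ¬ IsParacel ends e f A) :
    ((kComp ends A : ℤ) - kComp ends (insert f A)) -
      ((kComp ends (insert e A) : ℤ) - kComp ends (insert f (insert e A))) = 0 := by
  obtain ⟨a, b, hE⟩ : ∃ a b, ends e = s(a, b) :=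
    Sym2.ind (fun a b => ⟨a, b, rfl⟩) (ends e)
  obtain ⟨c, d, hF⟩ : ∃ c d, ends f = s(c, d) :=
    Sym2.ind (fun c d => ⟨c, d, rfl⟩) (ends f)
  set G := etaGraph ends A
  by_cases hcd : G.Reachable c d
  · have hcd' : (etaGraph ends (insert e A)).Reachable c d := by
      rw [reach_insert ends hE]; exact Or.inl hcd
    rw [kComp_insert_of_reachable ends hF hcd, kComp_insert_of_reachable ends hF hcd']
    ring
  · have hcd' : ¬ (etaGraph ends (insert e A)).Reachable c d := by
      rw [reach_insert ends hE]
      rintro (h | ⟨h1, h2⟩ | ⟨h1, h2⟩)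
      · exact hcd h
      · exact hP ⟨he, hf, c, d, hcd,
          (joins_iff hE).mpr (Or.inl ⟨h1, h2.symm⟩),
          (joins_iff hF).mpr (Or.inl ⟨Reachable.refl _, Reachable.refl _⟩)⟩
      · exact hP ⟨he, hf, c, d, hcd,
          (joins_iff hE).mpr (Or.inr ⟨h1, h2.symm⟩),
          (joins_iff hF).mpr (Or.inl ⟨Reachable.refl _, Reachable.refl _⟩)⟩
    rw [kComp_insert_of_not_reachable ends hF hcd,
      kComp_insert_of_not_reachable ends hF hcd']
    push_cast
    ring

end Pointwise

section Monomial

variable [DecidableEq E] [Fintype E]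

/-- exponent finsupp of a finset -/
noncomputable def mF (A : Finset E) : E →₀ ℕ := Finsupp.equivFunOnFinite.symm (indic A)

lemma mF_apply (A : Finset E) (g : E) : mF A g = if g ∈ A then 1 else 0 := rfl

lemma xF_eq_monomial (A : Finset E) : xF A = MvPolynomial.monomial (mF A) 1 := by
  classical
  induction A using Finset.cons_induction with
  | empty =>
    have h0 : mF (∅ : Finset E) = 0 := by ext g; simp [mF_apply]
    simp [xF, h0]
  | cons a A ha ih =>
    have hm : mF (Finset.cons a A ha) = Finsupp.single a 1 + mF A := by
      ext g
      by_cases hg : g = a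
      · subst hg; simp [mF_apply, ha]
      · simp [mF_apply, hg, Finsupp.single_apply, Ne.symm hg]
    rw [xF, Finset.prod_cons, ← xF, ih, hm, MvPolynomial.monomial_single_add, pow_one]

lemma xF_mul_xF (A B : Finset E) :
    xF A * xF B = MvPolynomial.monomial (mF A + mF B) 1 := by
  rw [xF_eq_monomial, xF_eq_monomial, MvPolynomial.monomial_mul, mul_one]

lemma mF_add_eq_univ_iff {A B : Finset E} :
    mF A + mF B = mF Finset.univ ↔ B = Aᶜ := by
  constructor
  · intro h
    ext g
    have hthis := DFunLike.congr_fun h g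
    simp only [Finsupp.add_apply, mF_apply, Finset.mem_univ, if_true] at hthis
    by_cases hA : g ∈ A
    · have hB : g ∉ B := by
        intro hB; rw [if_pos hA, if_pos hB] at hthis; omega
      simp [hA, hB]
    · have hB : g ∈ B := by
        by_contra hB; rw [if_neg hA, if_neg hB] at hthis; omega
      simp [hA, hB]
  · rintro rfl
    ext g
    by_cases hA : g ∈ A <;>
      simp [Finsupp.add_apply, mF_apply, hA]

end Monomial

section Phi

variable [DecidableEq E] [Fintype E] [Fintype V]

/-- coeff of the all-ones monomial in the q-derivative evaluated at q = 1 -/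
noncomputable def Phi (P : Polynomial (MvPolynomial E ℤ)) : ℤ :=
  MvPolynomial.coeff (mF Finset.univ) (Polynomial.eval 1 (Polynomial.derivative P))

lemma Phi_term (ends : E → Sym2 V) (F G : Finset E) :
    Phi ((Polynomial.C (xF F) * Polynomial.X ^ kComp ends F) *
         (Polynomial.C (xF G) * Polynomial.X ^ kComp ends G)) =
      if G = Fᶜ then ((kComp ends F + kComp ends G : ℕ) : ℤ) else 0 := by
  have h1 : (Polynomial.C (xF F) * Polynomial.X ^ kComp ends F) *
      (Polynomial.C (xF G) * Polynomial.X ^ kComp ends G) =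
      Polynomial.C (xF F * xF G) * Polynomial.X ^ (kComp ends F + kComp ends G) := by
    rw [map_mul, pow_add]; ring
  rw [h1, Phi, Polynomial.derivative_C_mul_X_pow, Polynomial.eval_mul, Polynomial.eval_C,
    Polynomial.eval_pow, Polynomial.eval_X, one_pow, mul_one, xF_mul_xF,
    ← MvPolynomial.C_eq_coe_nat, mul_comm, MvPolynomial.coeff_C_mul,
    MvPolynomial.coeff_monomial]
  by_cases h : G = Fᶜ
  · rw [if_pos ((mF_add_eq_univ_iff).mpr h), if_pos h, mul_one]
  · rw [if_neg (fun hc => h ((mF_add_eq_univ_iff).mp hc)), if_neg h, mul_zero]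

lemma Phi_Tab_mul (ends : E → Sym2 V) (A B A' B' : Finset E) :
    Phi (Tab ends A B * Tab ends A' B') =
      ∑ F ∈ Finset.univ.filter (fun F : Finset E => A ⊆ F ∧ F ∩ B = ∅),
        ∑ G ∈ Finset.univ.filter (fun G : Finset E => A' ⊆ G ∧ G ∩ B' = ∅),
          (if G = Fᶜ then ((kComp ends F + kComp ends G : ℕ) : ℤ) else 0) := by
  rw [Tab, Tab, Finset.sum_mul_sum]
  rw [Phi, map_sum Polynomial.derivative, Polynomial.eval_finset_sum,
    MvPolynomial.coeff_sum]
  refine Finset.sum_congr rfl fun F _ => ?_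
  rw [map_sum Polynomial.derivative, Polynomial.eval_finset_sum, MvPolynomial.coeff_sum]
  exact Finset.sum_congr rfl fun G _ => Phi_term ends F G

lemma Phi_Tab_collapse (ends : E → Sym2 V) (A B A' B' : Finset E)
    (hcompl : ∀ F : Finset E, A ⊆ F → F ∩ B = ∅ → A' ⊆ Fᶜ ∧ Fᶜ ∩ B' = ∅) :
    Phi (Tab ends A B * Tab ends A' B') =
      ∑ F ∈ Finset.univ.filter (fun F : Finset E => A ⊆ F ∧ F ∩ B = ∅),
        ((kComp ends F + kComp ends Fᶜ : ℕ) : ℤ) := by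
  rw [Phi_Tab_mul]
  refine Finset.sum_congr rfl fun F hF => ?_
  rw [Finset.mem_filter] at hF
  rw [Finset.sum_eq_single Fᶜ]
  · rw [if_pos rfl]
  · intro G _ hG; rw [if_neg hG]
  · intro h
    exact absurd (Finset.mem_filter.mpr ⟨Finset.mem_univ (Fᶜ), hcompl F hF.2.1 hF.2.2⟩) h

end Phi

section Assembly

variable [DecidableEq E] [Fintype E] [Fintype V]

lemma mF_univ_split {e f : E} (hef : e ≠ f) :
    mF (Finset.univ : Finset E) =
      Finsupp.single e 1 + (Finsupp.single f 1 + mF (Eef e f)) := by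
  ext g
  by_cases h1 : g = e
  · subst h1
    simp [mF_apply, Eef, Finsupp.single_apply, Ne.symm hef]
  · by_cases h2 : g = f
    · subst h2
      simp [mF_apply, Eef, Finsupp.single_apply, hef, Ne.symm h1]
    · simp [mF_apply, Eef, Finsupp.single_apply, Ne.symm h1, Ne.symm h2, h1, h2]

lemma coeff_N_eval (ends : E → Sym2 V) {e f : E} (hef : e ≠ f)
    (N : Polynomial (MvPolynomial E ℤ))
    (hN : Dpoly ends e f =
      Polynomial.C (MvPolynomial.X e) * Polynomial.C (MvPolynomial.X f) *
        (1 - Polynomial.X) * N) :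
    MvPolynomial.coeff (mF (Eef e f)) (Polynomial.eval 1 N) =
      - Phi (Dpoly ends e f) := by
  have hD : Polynomial.eval 1 (Polynomial.derivative (Dpoly ends e f)) =
      -(MvPolynomial.X e * (MvPolynomial.X f * Polynomial.eval 1 N)) := by
    rw [hN]
    simp only [Polynomial.derivative_mul, Polynomial.derivative_sub,
      Polynomial.derivative_one, Polynomial.derivative_C, Polynomial.derivative_X,
      Polynomial.eval_mul, Polynomial.eval_add, Polynomial.eval_sub, Polynomial.eval_neg,
      Polynomial.eval_one, Polynomial.eval_X, Polynomial.eval_C, Polynomial.eval_zero]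
    ring
  simp only [Phi]
  rw [hD, mF_univ_split hef, MvPolynomial.coeff_neg,
    MvPolynomial.coeff_X_mul, MvPolynomial.coeff_X_mul, neg_neg]

lemma compl_insert_e {e f : E} (hef : e ≠ f) {A : Finset E} (hA : A ⊆ Eef e f) :
    (insert e A)ᶜ = insert f ((Eef e f) \ A) := by
  have hfA : f ∉ A := fun h => by simpa [Eef] using hA h
  have heA : e ∉ A := fun h => by simpa [Eef] using hA h
  ext g
  by_cases h1 : g = e
  · subst h1
    simp only [Finset.mem_compl, Finset.mem_insert, Finset.mem_sdiff, Eef,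
      Finset.mem_univ, true_and, Finset.mem_singleton, not_or]
    simp [heA, hef]
  · by_cases h2 : g = f
    · subst h2
      simp only [Finset.mem_compl, Finset.mem_insert, Finset.mem_sdiff, Eef,
        Finset.mem_univ, true_and, Finset.mem_singleton, not_or]
      simp [hfA, h1]
    · simp only [Finset.mem_compl, Finset.mem_insert, Finset.mem_sdiff, Eef,
        Finset.mem_univ, true_and, Finset.mem_singleton, not_or]
      simp [h1, h2]

lemma compl_insert_ef {e f : E} (hef : e ≠ f) {A : Finset E} (hA : A ⊆ Eef e f) :
    (insert f (insert e A))ᶜ = (Eef e f) \ A := by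
  have hfA : f ∉ A := fun h => by simpa [Eef] using hA h
  have heA : e ∉ A := fun h => by simpa [Eef] using hA h
  ext g
  by_cases h1 : g = e
  · subst h1
    simp [Eef, heA]
  · by_cases h2 : g = f
    · subst h2
      simp [Eef, hfA]
    · simp [Eef, h1, h2]

end Assembly

section Final

variable [DecidableEq E] [Fintype E] [Fintype V]

lemma inter_singleton_empty_iff {F : Finset E} {a : E} : F ∩ {a} = ∅ ↔ a ∉ F := by
  constructor
  · intro h ha
    have hm : a ∈ F ∩ {a} := Finset.mem_inter.mpr ⟨ha, Finset.mem_singleton_self a⟩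
    rw [h] at hm; exact Finset.notMem_empty a hm
  · intro h
    apply Finset.eq_empty_iff_forall_notMem.mpr
    intro x hx
    rcases Finset.mem_inter.mp hx with ⟨h1, h2⟩
    rw [Finset.mem_singleton] at h2; subst h2; exact h h1

lemma mem_Eef_iff {e f g : E} : g ∈ Eef e f ↔ ¬g = e ∧ ¬g = f := by
  simp [Eef]

lemma subset_Eef {e f : E} {F : Finset E} (he : e ∉ F) (hf : f ∉ F) : F ⊆ Eef e f :=
  fun x hx => mem_Eef_iff.mpr ⟨fun h => he (h ▸ hx), fun h => hf (h ▸ hx)⟩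

lemma filter_s1_eq {e f : E} (hef : e ≠ f) :
    Finset.univ.filter (fun F : Finset E => {e} ⊆ F ∧ F ∩ {f} = ∅) =
      (Eef e f).powerset.image (fun A => insert e A) := by
  ext F
  simp only [Finset.mem_filter, Finset.mem_univ, true_and, Finset.mem_image,
    Finset.mem_powerset, Finset.singleton_subset_iff, inter_singleton_empty_iff]
  constructor
  · rintro ⟨heF, hfF⟩
    refine ⟨F.erase e, ?_, Finset.insert_erase heF⟩
    intro x hx
    rcases Finset.mem_erase.mp hx with ⟨hxe, hxF⟩
    exact mem_Eef_iff.mpr ⟨hxe, fun h => hfF (h ▸ hxF)⟩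
  · rintro ⟨A, hA, rfl⟩
    have hfA : f ∉ A := fun h => (mem_Eef_iff.mp (hA h)).2 rfl
    exact ⟨Finset.mem_insert_self e A, by
      rw [Finset.mem_insert, not_or]; exact ⟨Ne.symm hef, hfA⟩⟩

lemma filter_s3_eq {e f : E} (hef : e ≠ f) :
    Finset.univ.filter (fun F : Finset E => {e, f} ⊆ F ∧ F ∩ ∅ = ∅) =
      (Eef e f).powerset.image (fun A => insert f (insert e A)) := by
  ext F
  simp only [Finset.mem_filter, Finset.mem_univ, true_and, Finset.mem_image,
    Finset.mem_powerset, Finset.insert_subset_iff, Finset.singleton_subset_iff,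
    Finset.inter_empty, and_true]
  constructor
  · rintro ⟨heF, hfF⟩
    have hef' : e ∈ F.erase f := Finset.mem_erase.mpr ⟨hef, heF⟩
    refine ⟨(F.erase f).erase e, ?_, ?_⟩
    · intro x hx
      rcases Finset.mem_erase.mp hx with ⟨hxe, hx2⟩
      rcases Finset.mem_erase.mp hx2 with ⟨hxf, _⟩
      exact mem_Eef_iff.mpr ⟨hxe, hxf⟩
    · rw [Finset.insert_erase hef', Finset.insert_erase hfF]
  · rintro ⟨A, hA, rfl⟩
    have heA : e ∉ A := fun h => (mem_Eef_iff.mp (hA h)).1 rfl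
    have hfA : f ∉ A := fun h => (mem_Eef_iff.mp (hA h)).2 rfl
    exact ⟨Finset.mem_insert_of_mem (Finset.mem_insert_self e A),
      Finset.mem_insert_self f _⟩

end Final

end Graph

/-- if `D = x_e x_f (1−q) N`, then the coefficient of
`x^{λ*}` (with `λ* = 1_{E^{ef}}`) in `N|_{q=1}` is the number of paracels. -/
theorem stmt11 {V E : Type*} [Fintype V] [Fintype E] [DecidableEq E]
    (ends : E → Sym2 V) (e f : E) (hef : e ≠ f)
    (N : Polynomial (MvPolynomial E ℤ))
    (hN : Dpoly ends e f =
      Polynomial.C (MvPolynomial.X e) * Polynomial.C (MvPolynomial.X f) *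
        (1 - Polynomial.X) * N) :
    MvPolynomial.coeff (Finsupp.equivFunOnFinite.symm (indic (Eef e f)))
        (Polynomial.eval 1 N) =
      ({F : Finset E | IsParacel ends e f F}.ncard : ℤ) := by
  classical
  have hidx : (Finsupp.equivFunOnFinite.symm (indic (Eef e f))) = mF (Eef e f) := rfl
  rw [hidx, coeff_N_eval ends hef N hN]
  have hPhiD : Phi (Dpoly ends e f) =
      Phi (Tab ends {e} {f} * Tab ends {f} {e}) -
        Phi (Tab ends ({e, f} : Finset E) ∅ * Tab ends ∅ {e, f}) := by
    simp only [Phi, Dpoly, map_sub, Polynomial.eval_sub, MvPolynomial.coeff_sub]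
  have hc1 := Phi_Tab_collapse ends {e} {f} {f} {e} (fun F heF hFf => by
    have hfF : f ∉ F := inter_singleton_empty_iff.mp hFf
    have heF' : e ∈ F := Finset.singleton_subset_iff.mp heF
    refine ⟨Finset.singleton_subset_iff.mpr (Finset.mem_compl.mpr hfF), ?_⟩
    rw [inter_singleton_empty_iff, Finset.mem_compl, not_not]
    exact heF')
  have hc3 := Phi_Tab_collapse ends {e, f} ∅ ∅ {e, f} (fun F hefF _ => by
    refine ⟨Finset.empty_subset _, ?_⟩
    apply Finset.eq_empty_iff_forall_notMem.mpr
    intro x hx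
    rcases Finset.mem_inter.mp hx with ⟨h1, h2⟩
    exact (Finset.mem_compl.mp h1) (hefF h2))
  rw [hPhiD, hc1, hc3, filter_s1_eq hef, filter_s3_eq hef]
  have inj1 : ∀ A ∈ (Eef e f).powerset, ∀ B ∈ (Eef e f).powerset,
      insert e A = insert e B → A = B := by
    intro A hA B hB h
    have heA : e ∉ A := fun hh => (mem_Eef_iff.mp (Finset.mem_powerset.mp hA hh)).1 rfl
    have heB : e ∉ B := fun hh => (mem_Eef_iff.mp (Finset.mem_powerset.mp hB hh)).1 rfl
    rw [← Finset.erase_insert heA, h, Finset.erase_insert heB]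
  have inj3 : ∀ A ∈ (Eef e f).powerset, ∀ B ∈ (Eef e f).powerset,
      insert f (insert e A) = insert f (insert e B) → A = B := by
    intro A hA B hB h
    have heA : e ∉ A := fun hh => (mem_Eef_iff.mp (Finset.mem_powerset.mp hA hh)).1 rfl
    have heB : e ∉ B := fun hh => (mem_Eef_iff.mp (Finset.mem_powerset.mp hB hh)).1 rfl
    have hfA : f ∉ insert e A := by
      rw [Finset.mem_insert, not_or]
      exact ⟨Ne.symm hef, fun hh => (mem_Eef_iff.mp (Finset.mem_powerset.mp hA hh)).2 rfl⟩
    have hfB : f ∉ insert e B := by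
      rw [Finset.mem_insert, not_or]
      exact ⟨Ne.symm hef, fun hh => (mem_Eef_iff.mp (Finset.mem_powerset.mp hB hh)).2 rfl⟩
    have h2 : insert e A = insert e B := by
      rw [← Finset.erase_insert hfA, h, Finset.erase_insert hfB]
    rw [← Finset.erase_insert heA, h2, Finset.erase_insert heB]
  rw [Finset.sum_image inj1, Finset.sum_image inj3]
  have hsum1 : ∑ A ∈ (Eef e f).powerset,
        ((kComp ends (insert e A) + kComp ends (insert e A)ᶜ : ℕ) : ℤ) =
      ∑ A ∈ (Eef e f).powerset,
        ((kComp ends (insert e A) : ℤ) + (kComp ends (insert f (Eef e f \ A)) : ℤ)) :=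
    Finset.sum_congr rfl fun A hA => by
      rw [compl_insert_e hef (Finset.mem_powerset.mp hA)]; push_cast; ring
  have hsum3 : ∑ A ∈ (Eef e f).powerset,
        ((kComp ends (insert f (insert e A)) +
          kComp ends (insert f (insert e A))ᶜ : ℕ) : ℤ) =
      ∑ A ∈ (Eef e f).powerset,
        ((kComp ends (insert f (insert e A)) : ℤ) + (kComp ends (Eef e f \ A) : ℤ)) :=
    Finset.sum_congr rfl fun A hA => by
      rw [compl_insert_ef hef (Finset.mem_powerset.mp hA)]; push_cast; ring
  rw [hsum1, hsum3, Finset.sum_add_distrib, Finset.sum_add_distrib]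
  have hre1 : ∑ A ∈ (Eef e f).powerset, (kComp ends (Eef e f \ A) : ℤ) =
      ∑ A ∈ (Eef e f).powerset, (kComp ends A : ℤ) :=
    Finset.sum_nbij' (fun A => Eef e f \ A) (fun A => Eef e f \ A)
      (fun A _ => Finset.mem_powerset.mpr (Finset.sdiff_subset))
      (fun A _ => Finset.mem_powerset.mpr (Finset.sdiff_subset))
      (fun A hA => Finset.sdiff_sdiff_eq_self (Finset.mem_powerset.mp hA))
      (fun A hA => Finset.sdiff_sdiff_eq_self (Finset.mem_powerset.mp hA))
      (fun A _ => rfl)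
  have hre2 : ∑ A ∈ (Eef e f).powerset, (kComp ends (insert f (Eef e f \ A)) : ℤ) =
      ∑ A ∈ (Eef e f).powerset, (kComp ends (insert f A) : ℤ) :=
    Finset.sum_nbij' (fun A => Eef e f \ A) (fun A => Eef e f \ A)
      (fun A _ => Finset.mem_powerset.mpr (Finset.sdiff_subset))
      (fun A _ => Finset.mem_powerset.mpr (Finset.sdiff_subset))
      (fun A hA => Finset.sdiff_sdiff_eq_self (Finset.mem_powerset.mp hA))
      (fun A hA => Finset.sdiff_sdiff_eq_self (Finset.mem_powerset.mp hA))
      (fun A _ => rfl)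
  rw [hre1, hre2, neg_sub]
  have hassemble :
      (∑ A ∈ (Eef e f).powerset, (kComp ends (insert f (insert e A)) : ℤ) +
        ∑ A ∈ (Eef e f).powerset, (kComp ends A : ℤ)) -
      (∑ A ∈ (Eef e f).powerset, (kComp ends (insert e A) : ℤ) +
        ∑ A ∈ (Eef e f).powerset, (kComp ends (insert f A) : ℤ)) =
      ∑ A ∈ (Eef e f).powerset, (if IsParacel ends e f A then (1 : ℤ) else 0) := by
    rw [← Finset.sum_add_distrib, ← Finset.sum_add_distrib, ← Finset.sum_sub_distrib]
    refine Finset.sum_congr rfl fun A hA => ?_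
    have hsub := Finset.mem_powerset.mp hA
    have heA : e ∉ A := fun h => (mem_Eef_iff.mp (hsub h)).1 rfl
    have hfA : f ∉ A := fun h => (mem_Eef_iff.mp (hsub h)).2 rfl
    by_cases hP : IsParacel ends e f A
    · rw [if_pos hP]
      have := pointwise_paracel ends hP
      linarith
    · rw [if_neg hP]
      have := pointwise_not_paracel ends heA hfA hP
      linarith
  rw [hassemble, Finset.sum_boole]
  congr 1
  have hset : {F : Finset E | IsParacel ends e f F} =
      ↑((Eef e f).powerset.filter (fun F => IsParacel ends e f F)) := by
    ext F
    simp only [Set.mem_setOf_eq, Finset.coe_filter, Finset.mem_powerset]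
    exact ⟨fun h => ⟨subset_Eef h.1 h.2.1, h⟩, fun h => h.2⟩
  rw [hset, Set.ncard_coe_finset]
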